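/- Jacobian-difference bound under per-neuron movement (second part of Lemma A.3): Assume σ is k-times continuously differentiable with σ^{(k)} L-Lipschitz, and ‖x_i‖ = 1 for all i. Let B > 0 and let W ∈ (ℝ^d)^m satisfy max_{r ∈ {1,…,m}} ‖w_r − w_{r,0}‖ ≤ B m^{−1/2}. Then ‖J(W) − J^{(k)}(W)‖_F ≤ (L √n / k!) · B^k · m^{−k/2}. -/

import Mathlib

open scoped BigOperators RealInnerProductSpace
noncomputable section

/-- Weight space: `m` neurons, each in `ℝ^d`, with the Frobenius (ℓ²-of-ℓ²) norm. -/
abbrev Wts (d m : ℕ) : Type := PiLp 2 (fun _ : Fin m => EuclideanSpace ℝ (Fin d))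

/-- Two-layer network `f_W(x) = m^{-1/2} ∑_r a_r σ(⟨w_r, x⟩)`. -/
def net (d m : ℕ) (σ : ℝ → ℝ) (a : Fin m → ℝ) (W : Wts d m)
    (x : EuclideanSpace ℝ (Fin d)) : ℝ :=
  (Real.sqrt m)⁻¹ * ∑ r : Fin m, a r * σ ⟪W r, x⟫

/-- The `k`-th order Taylorized model of the network around `W₀`. -/
def netT (d m k : ℕ) (σ : ℝ → ℝ) (a : Fin m → ℝ) (W₀ : Wts d m) (W : Wts d m)
    (x : EuclideanSpace ℝ (Fin d)) : ℝ :=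
  (Real.sqrt m)⁻¹ * ∑ r : Fin m, a r *
    ∑ j ∈ Finset.range (k + 1),
      (iteratedDeriv j σ ⟪W₀ r, x⟫ / (j.factorial : ℝ)) * ⟪W r - W₀ r, x⟫ ^ j

/-- Residual vector `g(W) ∈ ℝⁿ`, `g(W)ᵢ = f_W(xᵢ) - yᵢ`. -/
def resid (d m n : ℕ) (σ : ℝ → ℝ) (a : Fin m → ℝ)
    (X : Fin n → EuclideanSpace ℝ (Fin d)) (y : EuclideanSpace ℝ (Fin n))
    (W : Wts d m) : EuclideanSpace ℝ (Fin n) :=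
  WithLp.toLp 2 (fun i => net d m σ a W (X i) - y i)

/-- Residual vector `g⁽ᵏ⁾(W) ∈ ℝⁿ` of the Taylorized model. -/
def residT (d m n k : ℕ) (σ : ℝ → ℝ) (a : Fin m → ℝ) (W₀ : Wts d m)
    (X : Fin n → EuclideanSpace ℝ (Fin d)) (y : EuclideanSpace ℝ (Fin n))
    (W : Wts d m) : EuclideanSpace ℝ (Fin n) :=
  WithLp.toLp 2 (fun i => netT d m k σ a W₀ W (X i) - y i)

/-- Squared loss `L(W) = ½‖g(W)‖²`. -/
def loss (d m n : ℕ) (σ : ℝ → ℝ) (a : Fin m → ℝ)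
    (X : Fin n → EuclideanSpace ℝ (Fin d)) (y : EuclideanSpace ℝ (Fin n))
    (W : Wts d m) : ℝ :=
  (1 / 2) * ‖resid d m n σ a X y W‖ ^ 2

/-- Squared loss `L⁽ᵏ⁾(W) = ½‖g⁽ᵏ⁾(W)‖²` of the Taylorized model. -/
def lossT (d m n k : ℕ) (σ : ℝ → ℝ) (a : Fin m → ℝ) (W₀ : Wts d m)
    (X : Fin n → EuclideanSpace ℝ (Fin d)) (y : EuclideanSpace ℝ (Fin n))
    (W : Wts d m) : ℝ :=
  (1 / 2) * ‖residT d m n k σ a W₀ X y W‖ ^ 2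

/-- `i`-th row of the Jacobian `J(W)`: the gradient of `W ↦ f_W(xᵢ)`.
Its `r`-th block `Jrow ... W i r` is the gradient `∇_{w_r} f_W(xᵢ)`. -/
def Jrow (d m n : ℕ) (σ : ℝ → ℝ) (a : Fin m → ℝ)
    (X : Fin n → EuclideanSpace ℝ (Fin d)) (W : Wts d m) (i : Fin n) : Wts d m :=
  gradient (fun V => net d m σ a V (X i)) W

/-- `i`-th row of the Taylorized Jacobian `J⁽ᵏ⁾(W)`. -/
def JrowT (d m n k : ℕ) (σ : ℝ → ℝ) (a : Fin m → ℝ) (W₀ : Wts d m)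
    (X : Fin n → EuclideanSpace ℝ (Fin d)) (W : Wts d m) (i : Fin n) : Wts d m :=
  gradient (fun V => netT d m k σ a W₀ V (X i)) W

/-! Both Jacobian rows have the same block structure: the `r`-th block of the `i`-th row is
`m^{-1/2} a_r s_r x_i` with a scalar `s_r`, namely `σ'(⟨w_r, x_i⟩)` for `J` and, for `J^{(k)}`, the
derivative at `⟨w_r, x_i⟩` of the order-`k` Taylor polynomial of `σ` around `⟨w_{r,0}, x_i⟩`, which
is the order-`(k-1)` Taylor polynomial of `σ'`. So the blocks of `J - J^{(k)}` are Taylor remainders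
of `σ'`, whose `(k-1)`-st derivative is `L`-Lipschitz; each is at most
`L |⟨w_r - w_{r,0}, x_i⟩|^k / k! ≤ L (B m^{-1/2})^k / k!`. Summing squares over the `m` blocks and
the `n` rows contributes `√m · m^{-1/2} · √n`. -/

open scoped Nat

theorem abs_le_of_abs_deriv_le_mul_abs_sub_pow {h h' : ℝ → ℝ} {t C : ℝ} {q : ℕ}
    (hh : ∀ u, HasDerivAt h (h' u) u) (ht : h t = 0)
    (bound : ∀ u, |h' u| ≤ C * |u - t| ^ q) (s : ℝ) :
    |h s| ≤ C * |s - t| ^ (q + 1) / (q + 1) := by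
  wlog hts : t ≤ s generalizing h h' s
  · have hrefl : ∀ u, HasDerivAt (fun u => h (2 * t - u)) (-h' (2 * t - u)) u := fun u =>
      ((hh _).comp u ((hasDerivAt_id u).const_sub _)).congr_deriv (by simp)
    have := this hrefl (by rwa [show 2 * t - t = t by ring]) (fun u => by
        simpa [abs_sub_comm (2 * t - u), show t - (2 * t - u) = u - t by ring]
          using bound (2 * t - u))
      (2 * t - s) (by linarith)
    simpa [abs_sub_comm s, show 2 * t - s - t = t - s by ring] using this
  have hB : ∀ u, HasDerivAt (fun u => C * (u - t) ^ (q + 1) / (q + 1)) (C * (u - t) ^ q) u :=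
    fun u => (((hasDerivAt_id u).sub_const t).pow (q + 1)).const_mul C |>.div_const _
      |>.congr_deriv (by push_cast; field_simp; simp)
  have := image_norm_le_of_norm_deriv_right_le_deriv_boundary
    (fun u _ => (hh u).continuousAt.continuousWithinAt) (fun u _ => (hh u).hasDerivWithinAt)
    (by simp [ht]) hB (fun u hu => by simpa [abs_of_nonneg (sub_nonneg.2 hu.1)] using bound u)
    ⟨hts, le_rfl⟩
  simpa [abs_of_nonneg (sub_nonneg.2 hts)] using this

theorem taylorWithinEval_univ_eq_sum (f : ℝ → ℝ) (n : ℕ) (x₀ x : ℝ) :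
    taylorWithinEval f n Set.univ x₀ x =
      ∑ j ∈ Finset.range (n + 1), iteratedDeriv j f x₀ / j ! * (x - x₀) ^ j := by
  simp only [taylor_within_apply, iteratedDerivWithin_univ, smul_eq_mul]
  exact Finset.sum_congr rfl fun j _ => by ring

theorem hasDerivAt_taylorWithinEval_univ_succ (f : ℝ → ℝ) (n : ℕ) (x₀ x : ℝ) :
    HasDerivAt (taylorWithinEval f (n + 1) Set.univ x₀)
      (taylorWithinEval (deriv f) n Set.univ x₀ x) x := by
  simpa only [derivWithin_univ] using
    hasDerivAt_taylorWithinEval_succ f n (s := Set.univ) (x₀ := x₀) (x := x)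

/-- Induction on `n`: the order-`(n + 1)` remainder of `f` vanishes at `x₀` and its derivative is
the order-`n` remainder of `f'`. -/
theorem abs_sub_taylorWithinEval_univ_le {f : ℝ → ℝ} {n : ℕ} {L : ℝ} (hf : ContDiff ℝ n f)
    (hlip : ∀ s t, |iteratedDeriv n f s - iteratedDeriv n f t| ≤ L * |s - t|) (x₀ x : ℝ) :
    |f x - taylorWithinEval f n Set.univ x₀ x| ≤ L * |x - x₀| ^ (n + 1) / (n + 1)! := by
  induction n generalizing f L x with
  | zero => simpa using hlip x x₀
  | succ n ih =>
    rw [Nat.cast_succ, contDiff_succ_iff_deriv] at hf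
    have hderiv : ∀ u, |deriv f u - taylorWithinEval (deriv f) n Set.univ x₀ u|
        ≤ L / (n + 1)! * |u - x₀| ^ (n + 1) := fun u => by
      have := ih hf.2.2 (by simpa [iteratedDeriv_succ'] using hlip) (x := u)
      rwa [mul_div_right_comm] at this
    have := abs_le_of_abs_deriv_le_mul_abs_sub_pow
      (fun u => ((hf.1 u).hasDerivAt).fun_sub (hasDerivAt_taylorWithinEval_univ_succ f n x₀ u))
      (by simp) hderiv x
    convert this using 1
    rw [Nat.factorial_succ (n + 1)]
    push_cast
    field_simp

theorem hasGradientAt_sum_comp_inner {ι E : Type*} [Fintype ι] [NormedAddCommGroup E]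
    [InnerProductSpace ℝ E] [CompleteSpace E] {f : ι → ℝ → ℝ} {f' : ι → ℝ} {x : E}
    {W : PiLp 2 fun _ : ι => E} (hf : ∀ r, HasDerivAt (f r) (f' r) ⟪W r, x⟫) :
    HasGradientAt (fun V : PiLp 2 (fun _ : ι => E) => ∑ r, f r ⟪V r, x⟫)
      (WithLp.toLp 2 fun r => f' r • x) W := by
  let coord (r : ι) : StrongDual ℝ (PiLp 2 fun _ : ι => E) :=
    (innerSL ℝ x).comp (PiLp.proj 2 (fun _ : ι => E) r)
  have hcoord : ∀ r V, coord r V = ⟪V r, x⟫ := fun r V => real_inner_comm _ _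
  have hterm : ∀ r ∈ Finset.univ, HasFDerivAt (fun V : PiLp 2 (fun _ : ι => E) => f r ⟪V r, x⟫)
      (f' r • coord r) W := fun r _ => by
    rw [show (fun V => f r ⟪V r, x⟫) = f r ∘ coord r from funext fun V => by simp [hcoord]]
    exact (hf r).comp_hasFDerivAt_of_eq W (coord r).hasFDerivAt (hcoord r W).symm
  rw [hasGradientAt_iff_hasFDerivAt]
  refine (HasFDerivAt.fun_sum hterm).congr_fderiv ?_
  ext V
  simp [PiLp.inner_apply, hcoord, real_inner_smul_left, real_inner_comm]

theorem sqrt_sum_norm_sq_le {ι E : Type*} [Fintype ι] [SeminormedAddCommGroup E] {v : ι → E}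
    {C : ℝ} (hC : 0 ≤ C) (hv : ∀ i, ‖v i‖ ≤ C) :
    √(∑ i, ‖v i‖ ^ 2) ≤ √(Fintype.card ι) * C := by
  calc √(∑ i, ‖v i‖ ^ 2) ≤ √(∑ _i : ι, C ^ 2) :=
        Real.sqrt_le_sqrt <| Finset.sum_le_sum fun i _ =>
          pow_le_pow_left₀ (norm_nonneg _) (hv i) 2
    _ = √(Fintype.card ι) * C := by
        rw [Finset.sum_const, Finset.card_univ, nsmul_eq_mul, Real.sqrt_mul (Nat.cast_nonneg _),
          Real.sqrt_sq hC]

theorem inv_sqrt_pow_eq_rpow {x : ℝ} (hx : 0 ≤ x) (k : ℕ) :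
    (√x)⁻¹ ^ k = x ^ (-(k : ℝ) / 2) := by
  rw [Real.sqrt_eq_rpow, ← Real.rpow_neg hx, ← Real.rpow_mul_natCast hx]
  ring_nf

theorem Jrow_eq_toLp {d m n : ℕ} {σ : ℝ → ℝ} (hσ : Differentiable ℝ σ) (a : Fin m → ℝ)
    (X : Fin n → EuclideanSpace ℝ (Fin d)) (W : Wts d m) (i : Fin n) :
    Jrow d m n σ a X W i =
      WithLp.toLp 2 fun r => ((√m)⁻¹ * a r * deriv σ ⟪W r, X i⟫) • X i := by
  have hnet : (fun V => net d m σ a V (X i)) = fun V => ∑ r, (√m)⁻¹ * a r * σ ⟪V r, X i⟫ := by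
    simp only [net, Finset.mul_sum, mul_assoc]
  rw [Jrow, hnet]
  exact (hasGradientAt_sum_comp_inner fun r => (hσ _).hasDerivAt.const_mul _).gradient

theorem JrowT_succ_eq_toLp {d m n p : ℕ} (σ : ℝ → ℝ) (a : Fin m → ℝ) (W₀ : Wts d m)
    (X : Fin n → EuclideanSpace ℝ (Fin d)) (W : Wts d m) (i : Fin n) :
    JrowT d m n (p + 1) σ a W₀ X W i =
      WithLp.toLp 2 fun r => ((√m)⁻¹ * a r *
        taylorWithinEval (deriv σ) p Set.univ ⟪W₀ r, X i⟫ ⟪W r, X i⟫) • X i := by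
  have hnetT : (fun V => netT d m (p + 1) σ a W₀ V (X i)) = fun V =>
      ∑ r, (√m)⁻¹ * a r * taylorWithinEval σ (p + 1) Set.univ ⟪W₀ r, X i⟫ ⟪V r, X i⟫ := by
    simp only [netT, Finset.mul_sum, mul_assoc, taylorWithinEval_univ_eq_sum, inner_sub_left]
  rw [JrowT, hnetT]
  exact (hasGradientAt_sum_comp_inner
    fun r => (hasDerivAt_taylorWithinEval_univ_succ _ _ _ _).const_mul _).gradient

/-- Jacobian-difference bound under a per-neuron movement bound (second
part of Lemma A.3). -/
theorem jacobian_difference_per_neuron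
    (d m n k : ℕ) (hm : 1 ≤ m) (hk : 1 ≤ k) (σ : ℝ → ℝ) (hσ : ContDiff ℝ k σ)
    (L : ℝ) (hlip : ∀ s t : ℝ, |iteratedDeriv k σ s - iteratedDeriv k σ t| ≤ L * |s - t|)
    (a : Fin m → ℝ) (ha : ∀ r, a r = 1 ∨ a r = -1)
    (W₀ : Wts d m) (X : Fin n → EuclideanSpace ℝ (Fin d)) (hX : ∀ i, ‖X i‖ = 1)
    (B : ℝ) (hB : 0 < B) (W : Wts d m)
    (hmove : ∀ r : Fin m, ‖W r - W₀ r‖ ≤ B * (Real.sqrt m)⁻¹) :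
    Real.sqrt (∑ i, ‖Jrow d m n σ a X W i - JrowT d m n k σ a W₀ X W i‖ ^ 2)
      ≤ L * Real.sqrt n / (k.factorial : ℝ) * B ^ k * (m : ℝ) ^ (-(k : ℝ) / 2) := by
  obtain ⟨p, rfl⟩ : ∃ p, k = p + 1 := ⟨k - 1, by omega⟩
  have hL : 0 ≤ L := by simpa using (abs_nonneg _).trans (hlip 1 0)
  rw [Nat.cast_succ, contDiff_succ_iff_deriv] at hσ
  set ε := L * (B * (√m)⁻¹) ^ (p + 1) / (p + 1)! with hε_def
  have hε : 0 ≤ ε := by positivity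
  have hneuron : ∀ i r, |deriv σ ⟪W r, X i⟫ -
      taylorWithinEval (deriv σ) p Set.univ ⟪W₀ r, X i⟫ ⟪W r, X i⟫| ≤ ε := by
    intro i r
    have hmove' : |⟪W r, X i⟫ - ⟪W₀ r, X i⟫| ≤ B * (√m)⁻¹ := by
      rw [← inner_sub_left]
      exact (abs_real_inner_le_norm _ _).trans (by rw [hX, mul_one]; exact hmove r)
    refine (abs_sub_taylorWithinEval_univ_le hσ.2.2
      (by simpa [iteratedDeriv_succ'] using hlip) _ _).trans ?_
    rw [hε_def]
    gcongr
  have hrow : ∀ i, ‖Jrow d m n σ a X W i - JrowT d m n (p + 1) σ a W₀ X W i‖ ≤ ε := by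
    intro i
    rw [Jrow_eq_toLp hσ.1, JrowT_succ_eq_toLp, PiLp.norm_eq_of_L2]
    calc _ ≤ √(Fintype.card (Fin m)) * ((√m)⁻¹ * ε) :=
          sqrt_sum_norm_sq_le (by positivity) fun r => ?_
      _ = ε := by rw [Fintype.card_fin, ← mul_assoc, mul_inv_cancel₀ (by positivity), one_mul]
    have har : |a r| = 1 := by rcases ha r with h | h <;> simp [h]
    calc _ = (√m)⁻¹ * |a r| * |deriv σ ⟪W r, X i⟫ -
          taylorWithinEval (deriv σ) p Set.univ ⟪W₀ r, X i⟫ ⟪W r, X i⟫| := by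
          rw [PiLp.sub_apply, PiLp.toLp_apply, PiLp.toLp_apply, ← sub_smul, ← mul_sub,
            norm_smul, hX, mul_one, Real.norm_eq_abs, abs_mul, abs_mul,
            abs_of_nonneg (by positivity)]
      _ ≤ (√m)⁻¹ * ε := by
          rw [har, mul_one]
          gcongr
          exact hneuron i r
  calc √(∑ i, ‖Jrow d m n σ a X W i - JrowT d m n (p + 1) σ a W₀ X W i‖ ^ 2)
      ≤ √(Fintype.card (Fin n)) * ε := sqrt_sum_norm_sq_le hε hrow
    _ = _ := by
        rw [Fintype.card_fin, hε_def, mul_pow, inv_sqrt_pow_eq_rpow (Nat.cast_nonneg m)]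
        ring
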